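/- arXiv:2307.16720 — 5 statements merged into one kernel-verified Lean document; each statement's English description precedes it below -/
import Mathlib

section
/- For a finite sample of n continuous functions x_1,...,x_n on a compact interval I (with positive Lebesgue measure) that includes the function x itself (x = x_j for some j), and assuming that for every i ≠ j the set {t ∈ I : x_i(t) = x(t)} has Lebesgue measure zero, the modified hypograph index and modified epigraph index satisfy MHI_n(x) − MEI_n(x) = 1/n, where MEI_n(x) = 1 − (1/(n·λ(I))) Σ_{i=1}^n λ({t ∈ I : x_i(t) ≥ x(t)}) and MHI_n(x) = (1/(n·λ(I))) Σ_{i=1}^n λ({t ∈ I : x_i(t) ≤ x(t)}). -/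
/-!
For every `i` the sets `{x i ≤ x j}` and `{x j ≤ x i}` cover `I` and meet in `{x i = x j}`, which
is null for `i ≠ j` and all of `I` for `i = j`. Hence the two sums in `MHI` and `MEI` add up to
`(n + 1) λ(I)`, and `MHI - MEI = (n + 1) / n - 1 = 1 / n`.
-/

open MeasureTheory Set

section LeGeSplitting

variable {α β : Type*} [MeasurableSpace α] [LinearOrder β] {μ : Measure α} {s : Set α}
  {f g : α → β}

theorem measure_le_add_measure_ge (hm : NullMeasurableSet {t ∈ s | f t ≤ g t} μ) :
    μ {t ∈ s | f t ≤ g t} + μ {t ∈ s | g t ≤ f t} = μ s + μ {t ∈ s | f t = g t} := by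
  have hunion : {t ∈ s | g t ≤ f t} ∪ {t ∈ s | f t ≤ g t} = s := by
    ext t
    constructor
    · rintro (⟨ht, -⟩ | ⟨ht, -⟩) <;> exact ht
    · intro ht
      exact (le_total (g t) (f t)).imp (⟨ht, ·⟩) (⟨ht, ·⟩)
  have hinter : {t ∈ s | g t ≤ f t} ∩ {t ∈ s | f t ≤ g t} = {t ∈ s | f t = g t} := by
    ext t
    simp only [mem_inter_iff, mem_ofPred_eq]
    exact ⟨fun ⟨⟨ht, hgf⟩, _, hfg⟩ ↦ ⟨ht, le_antisymm hfg hgf⟩,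
      fun ⟨ht, h⟩ ↦ ⟨⟨ht, h.ge⟩, ht, h.le⟩⟩
  rw [add_comm, ← measure_union_add_inter₀ _ hm, hunion, hinter]

theorem toReal_measure_le_add_toReal_measure_ge (hs : μ s ≠ ⊤)
    (hm : NullMeasurableSet {t ∈ s | f t ≤ g t} μ) :
    (μ {t ∈ s | f t ≤ g t}).toReal + (μ {t ∈ s | g t ≤ f t}).toReal
      = (μ s).toReal + (μ {t ∈ s | f t = g t}).toReal := by
  have hfin : ∀ p : α → Prop, μ {t ∈ s | p t} ≠ ⊤ :=
    fun p ↦ ne_top_of_le_ne_top hs (measure_mono (sep_subset s p))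
  rw [← ENNReal.toReal_add (hfin _) (hfin _), ← ENNReal.toReal_add hs (hfin _),
    measure_le_add_measure_ge hm]

end LeGeSplitting

theorem mhi_sub_mei_eq_one_div_general
    (a b : ℝ) (hab : a < b) (n : ℕ)
    (x : Fin n → ℝ → ℝ)
    (hcont : ∀ i, ContinuousOn (x i) (Icc a b))
    (j : Fin n)
    (hnull : ∀ i, i ≠ j → volume {t ∈ Icc a b | x i t = x j t} = 0) :
    (∑ i, (volume {t ∈ Icc a b | x i t ≤ x j t}).toReal) / (n * (volume (Icc a b)).toReal)
      - (1 - (∑ i, (volume {t ∈ Icc a b | x j t ≤ x i t}).toReal)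
          / (n * (volume (Icc a b)).toReal))
    = 1 / n := by
  set V := (volume (Icc a b)).toReal with hV_def
  have hV : 0 < V := by rw [hV_def, Real.volume_Icc, ENNReal.toReal_ofReal] <;> linarith
  have hn : (0 : ℝ) < n := by exact_mod_cast j.pos
  have hdiag : ∑ i, (volume {t ∈ Icc a b | x i t = x j t}).toReal = V := by
    rw [Finset.sum_eq_single j (fun i _ hij ↦ by rw [hnull i hij, ENNReal.toReal_zero])
      (by simp)]
    simp only [and_true, ofPred_mem_eq, V]
  have hsum : (∑ i, (volume {t ∈ Icc a b | x i t ≤ x j t}).toReal)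
      + ∑ i, (volume {t ∈ Icc a b | x j t ≤ x i t}).toReal = (n + 1) * V := by
    rw [← Finset.sum_add_distrib, Finset.sum_congr rfl fun i _ ↦ toReal_measure_le_add_toReal_measure_ge
      (by simp [Real.volume_Icc])
      (isClosed_Icc.isClosed_le (hcont i) (hcont j)).measurableSet.nullMeasurableSet]
    rw [Finset.sum_add_distrib, hdiag, Finset.sum_const, Finset.card_univ, Fintype.card_fin,
      nsmul_eq_mul]
    ring
  field_simp
  linarith

/-- For a sample of n continuous functions on a compact interval `[a,b]`
containing the curve `x = x j`, with the equality sets of null measure,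
`MHI_n(x) - MEI_n(x) = 1/n`. -/
theorem mhi_sub_mei_eq_one_div
    (a b : ℝ) (hab : a < b) (n : ℕ) (hn : 0 < n)
    (x : Fin n → ℝ → ℝ)
    (hcont : ∀ i, ContinuousOn (x i) (Icc a b))
    (j : Fin n)
    (hnull : ∀ i, i ≠ j → volume {t ∈ Icc a b | x i t = x j t} = 0) :
    (∑ i, (volume {t ∈ Icc a b | x i t ≤ x j t}).toReal) / (n * (volume (Icc a b)).toReal)
      - (1 - (∑ i, (volume {t ∈ Icc a b | x j t ≤ x i t}).toReal)
          / (n * (volume (Icc a b)).toReal))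
    = 1 / n :=
  mhi_sub_mei_eq_one_div_general a b hab n x hcont j hnull
end

section
/- For a sample of n bivariate continuous functions x_1,...,x_n : I → ℝ² containing the curve x (i.e., x = x_j for some j), and assuming that for every i ≠ j and every k ∈ {1,2} the set {t ∈ I : x_{ik}(t) = x_k(t)} has Lebesgue measure zero, the bivariate modified indexes satisfy MHI_n(x) + MEI_n(x) = MHI²_{n,1}(x) + MHI²_{n,2}(x) − 1/n, where MHI²_{n,k}(x) = (1/(nλ(I))) Σ_i λ({t : x_{ik}(t) ≤ x_k(t)}) is the univariate modified hypograph index of the k-th component. -/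
/-!
For `i ≠ j`, let `P` and `Q` be the parts of `I` where `x i` lies below `x j` in the first,
resp. second, coordinate. Then `P ∩ Q` is the hypograph set, and since ties have measure zero the
epigraph set agrees a.e. with the set of strict inequalities, which is `I \ (P ∪ Q)`.
Inclusion–exclusion gives `λ(P ∩ Q) + λ(I) = λ(P) + λ(Q) + λ(I \ (P ∪ Q))`. For `i = j` all four
sets are `I`, and this one term produces the `- 1/n` after summing over `i` and dividing by `nλ(I)`.
-/

open MeasureTheory Set

theorem isClosed_sep_le_of_continuousOn {X β : Type*} [TopologicalSpace X] [TopologicalSpace β]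
    [Preorder β] [OrderClosedTopology β] {s : Set X} (hs : IsClosed s) {f g : X → β}
    (hf : ContinuousOn f s) (hg : ContinuousOn g s) : IsClosed {t ∈ s | f t ≤ g t} :=
  (hf.prodMk hg).preimage_isClosed_of_isClosed hs isClosed_le_prod

section

variable {α ι β : Type*} [MeasurableSpace α] {μ : Measure α} {s : Set α}

theorem sep_forall_le_ae_eq_sep_forall_lt [Countable ι] [PartialOrder β] {u v : α → ι → β}
    (hties : ∀ k, μ {t ∈ s | u t k = v t k} = 0) :
    {t ∈ s | ∀ k, u t k ≤ v t k} =ᵐ[μ] {t ∈ s | ∀ k, u t k < v t k} := by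
  refine (ae_le_set.2 <| measure_mono_null ?_ (measure_iUnion_null hties)).antisymm
    (LE.le.eventuallyLE fun t ht ↦ ⟨ht.1, fun k ↦ (ht.2 k).le⟩)
  rintro t ⟨⟨hts, hle⟩, hlt⟩
  obtain ⟨k, hk⟩ : ∃ k, ¬u t k < v t k := by simpa [hts] using hlt
  exact mem_iUnion.2 ⟨k, hts, (hle k).eq_of_not_lt hk⟩

theorem measureReal_sep_forall_le_add_measureReal [LinearOrder β] {u v : α → Fin 2 → β}
    (hs : μ s ≠ ⊤) (hmeas : ∀ k, MeasurableSet {t ∈ s | u t k ≤ v t k})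
    (hties : ∀ k, μ {t ∈ s | u t k = v t k} = 0) :
    μ.real {t ∈ s | ∀ k, u t k ≤ v t k} + μ.real s
      = μ.real {t ∈ s | u t 0 ≤ v t 0} + μ.real {t ∈ s | u t 1 ≤ v t 1}
        + μ.real {t ∈ s | ∀ k, v t k ≤ u t k} := by
  set P := {t ∈ s | u t 0 ≤ v t 0}
  set Q := {t ∈ s | u t 1 ≤ v t 1}
  have hP : μ P ≠ ⊤ := measure_ne_top_of_subset (sep_subset _ _) hs
  have hQ : μ Q ≠ ⊤ := measure_ne_top_of_subset (sep_subset _ _) hs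
  have hinter : {t ∈ s | ∀ k, u t k ≤ v t k} = P ∩ Q := by
    ext t; simp only [Fin.forall_fin_two, mem_ofPred_eq, mem_inter_iff, P, Q]; tauto
  have hepi : {t ∈ s | ∀ k, v t k < u t k} = s \ (P ∪ Q) := by
    ext t; simp only [Fin.forall_fin_two, mem_ofPred_eq, mem_sdiff, mem_union, P, Q]; grind
  have hties' : ∀ k, μ {t ∈ s | v t k = u t k} = 0 := by simpa only [eq_comm] using hties
  rw [hinter, measureReal_congr (sep_forall_le_ae_eq_sep_forall_lt hties'), hepi,
    ← measureReal_union_add_inter (hmeas 1) hP hQ,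
    ← measureReal_sdiff_add_inter ((hmeas 0).union (hmeas 1)) hs,
    inter_eq_self_of_subset_right (union_subset (sep_subset _ _) (sep_subset _ _))]
  ring

end

theorem bivariate_mhi_add_mei_general
    (a b : ℝ) (hab : a < b) (n : ℕ)
    (x : Fin n → ℝ → Fin 2 → ℝ)
    (hcont : ∀ i k, ContinuousOn (fun t => x i t k) (Icc a b))
    (j : Fin n)
    (hnull : ∀ i, i ≠ j → ∀ k : Fin 2, volume {t ∈ Icc a b | x i t k = x j t k} = 0) :
    (∑ i, (volume {t ∈ Icc a b | ∀ k : Fin 2, x i t k ≤ x j t k}).toReal)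
        / (n * (volume (Icc a b)).toReal)
      + (1 - (∑ i, (volume {t ∈ Icc a b | ∀ k : Fin 2, x j t k ≤ x i t k}).toReal)
          / (n * (volume (Icc a b)).toReal))
    = (∑ i, (volume {t ∈ Icc a b | x i t 0 ≤ x j t 0}).toReal)
        / (n * (volume (Icc a b)).toReal)
      + (∑ i, (volume {t ∈ Icc a b | x i t 1 ≤ x j t 1}).toReal)
        / (n * (volume (Icc a b)).toReal)
      - 1 / n := by
  simp only [← measureReal_def]
  set L := volume.real (Icc a b)
  have hL : 0 < L := by simp [L, hab]
  have hn : (0 : ℝ) < n := by exact_mod_cast j.pos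
  have per_curve : ∀ i, volume.real {t ∈ Icc a b | ∀ k : Fin 2, x i t k ≤ x j t k} + L
      = volume.real {t ∈ Icc a b | x i t 0 ≤ x j t 0}
        + volume.real {t ∈ Icc a b | x i t 1 ≤ x j t 1}
        + volume.real {t ∈ Icc a b | ∀ k : Fin 2, x j t k ≤ x i t k}
        - if i = j then L else 0 := by
    intro i
    by_cases hij : i = j
    · subst hij; simp only [le_refl, implies_true, sep_true, if_true]; ring
    · rw [if_neg hij, sub_zero]
      refine measureReal_sep_forall_le_add_measureReal measure_Icc_lt_top.ne (fun k ↦ ?_)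
        (hnull i hij)
      exact (isClosed_sep_le_of_continuousOn isClosed_Icc (hcont i k) (hcont j k)).measurableSet
  have hsum := Finset.sum_congr rfl fun i (_ : i ∈ Finset.univ) ↦ per_curve i
  simp only [Finset.sum_add_distrib, Finset.sum_sub_distrib, Finset.sum_ite_eq', Finset.mem_univ,
    if_true, Finset.sum_const, Finset.card_univ, Fintype.card_fin, nsmul_eq_mul] at hsum
  field_simp
  linarith

/-- bivariate relation `MHI_n(x) + MEI_n(x) = MHI²_{n,1}(x) + MHI²_{n,2}(x) - 1/n`. -/
theorem bivariate_mhi_add_mei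
    (a b : ℝ) (hab : a < b) (n : ℕ) (hn : 0 < n)
    (x : Fin n → ℝ → Fin 2 → ℝ)
    (hcont : ∀ i k, ContinuousOn (fun t => x i t k) (Icc a b))
    (j : Fin n)
    (hnull : ∀ i, i ≠ j → ∀ k : Fin 2, volume {t ∈ Icc a b | x i t k = x j t k} = 0) :
    (∑ i, (volume {t ∈ Icc a b | ∀ k : Fin 2, x i t k ≤ x j t k}).toReal)
        / (n * (volume (Icc a b)).toReal)
      + (1 - (∑ i, (volume {t ∈ Icc a b | ∀ k : Fin 2, x j t k ≤ x i t k}).toReal)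
          / (n * (volume (Icc a b)).toReal))
    = (∑ i, (volume {t ∈ Icc a b | x i t 0 ≤ x j t 0}).toReal)
        / (n * (volume (Icc a b)).toReal)
      + (∑ i, (volume {t ∈ Icc a b | x i t 1 ≤ x j t 1}).toReal)
        / (n * (volume (Icc a b)).toReal)
      - 1 / n :=
  bivariate_mhi_add_mei_general a b hab n x hcont j hnull
end

section
/- The multivariate epigraph index is invariant under component-wise positive affine transformations: if T(x)(t) = A(t)x(t) + b(t) where A(t) is a diagonal p×p matrix with strictly positive continuous diagonal entries A_k(t) > 0 and b ∈ C(I, ℝ^p), and the whole sample is transformed by T, then EI_n(T(x); T(x_1),…,T(x_n)) = EI_n(x; x_1,…,x_n). -/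
open Set
open scoped Classical

theorem forall_mul_add_le_mul_add_iff {ι α R : Type*} [Ring R] [LinearOrder R]
    [IsStrictOrderedRing R] {s : Set α} {A : ι → α → R} (hA : ∀ k, ∀ t ∈ s, 0 < A k t)
    (c : ι → α → R) (x y : α → ι → R) :
    (∀ k, ∀ t ∈ s, A k t * x t k + c k t ≤ A k t * y t k + c k t) ↔
      ∀ k, ∀ t ∈ s, x t k ≤ y t k := by
  refine forall_congr' fun k => forall₂_congr fun t ht => ?_
  rw [add_le_add_iff_right, mul_le_mul_iff_of_pos_left (hA k t ht)]

theorem ei_affine_invariant_general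
    (a b : ℝ) (n p : ℕ)
    (x : ℝ → Fin p → ℝ) (xs : Fin n → ℝ → Fin p → ℝ)
    (A bf : Fin p → ℝ → ℝ)
    (hApos : ∀ k, ∀ t ∈ Icc a b, 0 < A k t) :
    1 - (1 / (n : ℝ)) * ∑ i,
        (if (∀ k : Fin p, ∀ t ∈ Icc a b,
            A k t * x t k + bf k t ≤ A k t * xs i t k + bf k t) then (1 : ℝ) else 0)
    = 1 - (1 / (n : ℝ)) * ∑ i,
        (if (∀ k : Fin p, ∀ t ∈ Icc a b, x t k ≤ xs i t k) then (1 : ℝ) else 0) := by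
  simp only [forall_mul_add_le_mul_add_iff hApos]

/-- the multivariate epigraph index is invariant under component-wise
positive affine transformations `T(x)_k(t) = A_k(t) x_k(t) + b_k(t)` with `A_k > 0`. -/
theorem ei_affine_invariant
    (a b : ℝ) (hab : a < b) (n p : ℕ) (hn : 0 < n)
    (x : ℝ → Fin p → ℝ) (xs : Fin n → ℝ → Fin p → ℝ)
    (hx : ∀ k, ContinuousOn (fun t => x t k) (Icc a b))
    (hxs : ∀ i k, ContinuousOn (fun t => xs i t k) (Icc a b))
    (A bf : Fin p → ℝ → ℝ)
    (hA : ∀ k, ContinuousOn (A k) (Icc a b))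
    (hApos : ∀ k, ∀ t ∈ Icc a b, 0 < A k t)
    (hbf : ∀ k, ContinuousOn (bf k) (Icc a b)) :
    1 - (1 / (n : ℝ)) * ∑ i,
        (if (∀ k : Fin p, ∀ t ∈ Icc a b,
            A k t * x t k + bf k t ≤ A k t * xs i t k + bf k t) then (1 : ℝ) else 0)
    = 1 - (1 / (n : ℝ)) * ∑ i,
        (if (∀ k : Fin p, ∀ t ∈ Icc a b, x t k ≤ xs i t k) then (1 : ℝ) else 0) :=
  ei_affine_invariant_general a b n p x xs A bf hApos
end

section
/- The multivariate hypograph index is invariant under component-wise positive affine transformations: if T(x)(t) = A(t)x(t) + b(t) with A(t) diagonal having strictly positive continuous diagonal entries and b continuous, and the whole sample is transformed by T, then HI_n(T(x); T(x_1),…,T(x_n)) = HI_n(x; x_1,…,x_n). -/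
open MeasureTheory Set
open scoped Classical

theorem forall_affine_le_affine_iff {ι T : Type*} (s : Set T) (A c u v : ι → T → ℝ)
    (hA : ∀ k, ∀ t ∈ s, 0 < A k t) :
    (∀ k, ∀ t ∈ s, A k t * u k t + c k t ≤ A k t * v k t + c k t) ↔
      ∀ k, ∀ t ∈ s, u k t ≤ v k t :=
  forall_congr' fun k => forall₂_congr fun t ht => by
    rw [add_le_add_iff_right, mul_le_mul_iff_right₀ (hA k t ht)]

theorem hi_affine_invariant_general
    (a b : ℝ) (n p : ℕ)
    (x : ℝ → Fin p → ℝ) (xs : Fin n → ℝ → Fin p → ℝ)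
    (A bf : Fin p → ℝ → ℝ)
    (hApos : ∀ k, ∀ t ∈ Icc a b, 0 < A k t) :
    (1 / (n : ℝ)) * ∑ i,
        (if (∀ k : Fin p, ∀ t ∈ Icc a b,
            A k t * xs i t k + bf k t ≤ A k t * x t k + bf k t) then (1 : ℝ) else 0)
    = (1 / (n : ℝ)) * ∑ i,
        (if (∀ k : Fin p, ∀ t ∈ Icc a b, xs i t k ≤ x t k) then (1 : ℝ) else 0) := by
  congr 1
  refine Finset.sum_congr rfl fun i _ => ?_
  simp only [forall_affine_le_affine_iff _ A bf (fun k t => xs i t k) (fun k t => x t k) hApos]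

/-- the multivariate hypograph index is invariant under component-wise
positive affine transformations. -/
theorem hi_affine_invariant
    (a b : ℝ) (hab : a < b) (n p : ℕ) (hn : 0 < n)
    (x : ℝ → Fin p → ℝ) (xs : Fin n → ℝ → Fin p → ℝ)
    (hx : ∀ k, ContinuousOn (fun t => x t k) (Icc a b))
    (hxs : ∀ i k, ContinuousOn (fun t => xs i t k) (Icc a b))
    (A bf : Fin p → ℝ → ℝ)
    (hA : ∀ k, ContinuousOn (A k) (Icc a b))
    (hApos : ∀ k, ∀ t ∈ Icc a b, 0 < A k t)
    (hbf : ∀ k, ContinuousOn (bf k) (Icc a b)) :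
    (1 / (n : ℝ)) * ∑ i,
        (if (∀ k : Fin p, ∀ t ∈ Icc a b,
            A k t * xs i t k + bf k t ≤ A k t * x t k + bf k t) then (1 : ℝ) else 0)
    = (1 / (n : ℝ)) * ∑ i,
        (if (∀ k : Fin p, ∀ t ∈ Icc a b, xs i t k ≤ x t k) then (1 : ℝ) else 0) :=
  hi_affine_invariant_general a b n p x xs A bf hApos
end

section
/- The multivariate modified epigraph index MEI_n is invariant under component-wise positive affine transformations: if T(x)_k(t) = A_k(t)x_k(t) + b_k(t) with A_k : I → ℝ continuous, A_k(t) > 0 for all t ∈ I, and b_k continuous, and the entire sample is transformed by T, then MEI_n(T(x); T(x_1),…,T(x_n)) = MEI_n(x; x_1,…,x_n), and likewise for MHI_n. -/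
open MeasureTheory Set

theorem sep_forall_mul_add_le_mul_add_eq {α ι R : Type*} [Semiring R] [PartialOrder R]
    [IsOrderedCancelAddMonoid R] [PosMulMono R] [PosMulReflectLE R]
    {s : Set α} {A c : ι → α → R} (hA : ∀ k, ∀ t ∈ s, 0 < A k t) (u v : α → ι → R) :
    {t ∈ s | ∀ k, A k t * u t k + c k t ≤ A k t * v t k + c k t}
      = {t ∈ s | ∀ k, u t k ≤ v t k} :=
  sep_ext_iff.mpr fun t ht ↦ forall_congr' fun k ↦ by
    rw [add_le_add_iff_right, mul_le_mul_iff_right₀ (hA k t ht)]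

theorem mei_mhi_affine_invariant_general
    (a b : ℝ) (n p : ℕ)
    (x : ℝ → Fin p → ℝ) (xs : Fin n → ℝ → Fin p → ℝ)
    (A bf : Fin p → ℝ → ℝ)
    (hApos : ∀ k, ∀ t ∈ Icc a b, 0 < A k t) :
    (1 - (∑ i, (volume {t ∈ Icc a b | ∀ k : Fin p,
          A k t * x t k + bf k t ≤ A k t * xs i t k + bf k t}).toReal)
        / (n * (volume (Icc a b)).toReal)
      = 1 - (∑ i, (volume {t ∈ Icc a b | ∀ k : Fin p, x t k ≤ xs i t k}).toReal)
        / (n * (volume (Icc a b)).toReal))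
    ∧
    ((∑ i, (volume {t ∈ Icc a b | ∀ k : Fin p,
          A k t * xs i t k + bf k t ≤ A k t * x t k + bf k t}).toReal)
        / (n * (volume (Icc a b)).toReal)
      = (∑ i, (volume {t ∈ Icc a b | ∀ k : Fin p, xs i t k ≤ x t k}).toReal)
        / (n * (volume (Icc a b)).toReal)) := by
  simp only [sep_forall_mul_add_le_mul_add_eq hApos, and_self]

/-- `MEI_n` and `MHI_n` are invariant under component-wise positive affine
transformations `T(x)_k(t) = A_k(t) x_k(t) + b_k(t)` with `A_k > 0` continuous. -/
theorem mei_mhi_affine_invariant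
    (a b : ℝ) (hab : a < b) (n p : ℕ) (hn : 0 < n)
    (x : ℝ → Fin p → ℝ) (xs : Fin n → ℝ → Fin p → ℝ)
    (A bf : Fin p → ℝ → ℝ)
    (hA : ∀ k, ContinuousOn (A k) (Icc a b))
    (hApos : ∀ k, ∀ t ∈ Icc a b, 0 < A k t)
    (hbf : ∀ k, ContinuousOn (bf k) (Icc a b)) :
    (1 - (∑ i, (volume {t ∈ Icc a b | ∀ k : Fin p,
          A k t * x t k + bf k t ≤ A k t * xs i t k + bf k t}).toReal)
        / (n * (volume (Icc a b)).toReal)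
      = 1 - (∑ i, (volume {t ∈ Icc a b | ∀ k : Fin p, x t k ≤ xs i t k}).toReal)
        / (n * (volume (Icc a b)).toReal))
    ∧
    ((∑ i, (volume {t ∈ Icc a b | ∀ k : Fin p,
          A k t * xs i t k + bf k t ≤ A k t * x t k + bf k t}).toReal)
        / (n * (volume (Icc a b)).toReal)
      = (∑ i, (volume {t ∈ Icc a b | ∀ k : Fin p, xs i t k ≤ x t k}).toReal)
        / (n * (volume (Icc a b)).toReal)) :=
  mei_mhi_affine_invariant_general a b n p x xs A bf hApos
end
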